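/- The number of quadruples ((r₁,s₁),(r₂,s₂),(r₃,s₃),(r₄,s₄)), with each rⱼ ∈ {+1,-1} and each sⱼ ∈ {0, +, -, 2}, such that K_{r₁,s₁} - K_{r₂,s₂} + K_{r₃,s₃} - K_{r₄,s₄} ∈ (2π/a)·ℤ², where K_{r,±} = (rQ/a, ±rQ/a), K_{+,0} = (π/a, 0), K_{-,0} = (0, π/a), K_{-,2} = (0,0), K_{+,2} = (π/a, π/a), is exactly 196, provided Q ∈ (0, π), Q ≠ π/2, and Q/π is irrational. -/

import Mathlib

/-!
Every K_{r,s} has the form ((u₁π + v₁Q)/a, (u₂π + v₂Q)/a) with integer coefficient vectors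
u, v. Since Q/π is irrational, π and Q are linearly independent over ℚ, so an alternating sum
of such points lies in (2π/a)ℤ² exactly when its Q-coefficients vanish and its π-coefficients
are even. This is a condition on integer data only, and the 196 solutions among the 8⁴
quadruples are counted by evaluation.
-/

open Real

/-- The sign ±1 associated with the chirality index r (0 ↦ +1, 1 ↦ -1). -/
def chSign : Fin 2 → ℝ := fun r => if r = 0 then 1 else -1

/-- The eight points K_{r,s} in the Brillouin zone: s = 0 antinodal,
    s = 1 nodal (+), s = 2 nodal (-), s = 3 in/out. -/
noncomputable def Kpt (a Q : ℝ) : Fin 2 → Fin 4 → ℝ × ℝ := fun r s =>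
  if s = 0 then (if r = 0 then (π / a, 0) else (0, π / a))
  else if s = 1 then (chSign r * Q / a, chSign r * Q / a)
  else if s = 2 then (chSign r * Q / a, -(chSign r * Q / a))
  else (if r = 0 then (π / a, π / a) else (0, 0))

open Function

lemma int_mul_add_int_mul_eq_int_mul_iff {x y : ℝ} (h : Irrational (y / x)) {A B C : ℤ} :
    A * x + B * y = C * x ↔ B = 0 ∧ A = C := by
  have hx : x ≠ 0 := by rintro rfl; simp at h
  constructor
  · intro hABC
    have hB : B = 0 := by
      by_contra hB
      refine h.ne_rational (C - A) B ?_
      rw [div_eq_div_iff hx (by exact_mod_cast hB)]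
      push_cast
      linarith
    subst hB
    simpa [hx] using hABC
  · rintro ⟨rfl, rfl⟩
    simp

lemma exists_int_div_eq_two_pi_div_mul_iff {a Q : ℝ} (ha : a ≠ 0) (hQ : Irrational (Q / π))
    (A B : ℤ) : (∃ m : ℤ, (A * π + B * Q) / a = 2 * π / a * m) ↔ B = 0 ∧ Even A := by
  have hm (m : ℤ) :
      (A * π + B * Q) / a = 2 * π / a * m ↔ A * π + B * Q = ((2 * m : ℤ) : ℝ) * π := by
    rw [div_mul_eq_mul_div, div_left_inj' ha]
    push_cast
    constructor <;> intro h <;> linarith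
  simp only [hm, int_mul_add_int_mul_eq_int_mul_iff hQ, even_iff_two_dvd, Dvd.dvd,
    exists_and_left]

def altSum {ι M : Type*} [AddCommGroup M] (f : ι → M) (q : ι × ι × ι × ι) : M :=
  f q.1 - f q.2.1 + f q.2.2.1 - f q.2.2.2

lemma map_altSum {ι M N : Type*} [AddCommGroup M] [AddCommGroup N] (g : M →+ N) (f : ι → M)
    (q : ι × ι × ι × ι) : altSum (g ∘ f) q = g (altSum f q) := by
  simp only [altSum, comp_apply, map_sub, map_add]

def reciprocalLattice (a : ℝ) : Set (ℝ × ℝ) :=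
  {k | ∃ m n : ℤ, k = (2 * π / a * m, 2 * π / a * n)}

noncomputable def momentum (a Q : ℝ) : (ℤ × ℤ) × (ℤ × ℤ) →+ ℝ × ℝ where
  toFun c := ((c.1.1 * π + c.2.1 * Q) / a, (c.1.2 * π + c.2.2 * Q) / a)
  map_zero' := by simp
  map_add' c d := by ext <;> simp <;> ring

lemma momentum_mem_reciprocalLattice_iff {a Q : ℝ} (ha : a ≠ 0) (hQ : Irrational (Q / π))
    (c : (ℤ × ℤ) × (ℤ × ℤ)) :
    momentum a Q c ∈ reciprocalLattice a ↔ c.2 = 0 ∧ Even c.1.1 ∧ Even c.1.2 := by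
  simp only [reciprocalLattice, momentum, AddMonoidHom.coe_mk, ZeroHom.coe_mk, Set.mem_ofPred_eq,
    Prod.ext_iff, exists_and_left, exists_and_right,
    exists_int_div_eq_two_pi_div_mul_iff ha hQ, Prod.fst_zero, Prod.snd_zero]
  tauto

def kCoeff : Fin 2 → Fin 4 → (ℤ × ℤ) × (ℤ × ℤ) :=
  ![![((1, 0), (0, 0)), ((0, 0), (1, 1)), ((0, 0), (1, -1)), ((1, 1), (0, 0))],
    ![((0, 1), (0, 0)), ((0, 0), (-1, -1)), ((0, 0), (-1, 1)), 0]]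

lemma uncurry_Kpt_eq_momentum_comp (a Q : ℝ) :
    uncurry (Kpt a Q) = momentum a Q ∘ uncurry kCoeff := by
  ext ⟨r, s⟩ <;> fin_cases r <;> fin_cases s <;>
    simp [Kpt, kCoeff, chSign, momentum] <;> ring

lemma card_altSum_kCoeff_conserving :
    Fintype.card {q : (Fin 2 × Fin 4) × (Fin 2 × Fin 4) × (Fin 2 × Fin 4) × (Fin 2 × Fin 4) //
      (altSum (uncurry kCoeff) q).2 = 0 ∧ Even (altSum (uncurry kCoeff) q).1.1 ∧
        Even (altSum (uncurry kCoeff) q).1.2} = 196 := by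
  set_option maxRecDepth 100000 in decide

theorem stmt_19_general (a Q : ℝ) (ha : 0 < a) (hirr : Irrational (Q / π)) :
    Nat.card {q : (Fin 2 × Fin 4) × (Fin 2 × Fin 4) × (Fin 2 × Fin 4) × (Fin 2 × Fin 4) //
      ∃ m n : ℤ,
        Kpt a Q q.1.1 q.1.2 - Kpt a Q q.2.1.1 q.2.1.2
          + Kpt a Q q.2.2.1.1 q.2.2.1.2 - Kpt a Q q.2.2.2.1 q.2.2.2.2
        = ((2 * π / a) * (m : ℝ), (2 * π / a) * (n : ℝ))} = 196 := by
  have hcond (q : (Fin 2 × Fin 4) × (Fin 2 × Fin 4) × (Fin 2 × Fin 4) × (Fin 2 × Fin 4)) :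
      altSum (uncurry (Kpt a Q)) q ∈ reciprocalLattice a ↔
        (altSum (uncurry kCoeff) q).2 = 0 ∧ Even (altSum (uncurry kCoeff) q).1.1 ∧
          Even (altSum (uncurry kCoeff) q).1.2 := by
    rw [uncurry_Kpt_eq_momentum_comp, map_altSum]
    exact momentum_mem_reciprocalLattice_iff ha.ne' hirr _
  -- The constraint in the statement unfolds to `altSum (uncurry (Kpt a Q)) q ∈ reciprocalLattice a`.
  exact (Nat.card_congr (Equiv.subtypeEquivRight hcond)).trans
    ((Nat.card_eq_fintype_card).trans card_altSum_kCoeff_conserving)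

/-- For generic Q (Q/π irrational, 0 < Q < π, Q ≠ π/2), exactly 196 of the
    4096 flavor quadruples satisfy the momentum-conservation constraint
    K_{r₁,s₁} - K_{r₂,s₂} + K_{r₃,s₃} - K_{r₄,s₄} ∈ (2π/a)ℤ². -/
theorem stmt_19 (a Q : ℝ) (ha : 0 < a) (hQ0 : 0 < Q) (hQπ : Q < π)
    (hQhalf : Q ≠ π / 2) (hirr : Irrational (Q / π)) :
    Nat.card {q : (Fin 2 × Fin 4) × (Fin 2 × Fin 4) × (Fin 2 × Fin 4) × (Fin 2 × Fin 4) //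
      ∃ m n : ℤ,
        Kpt a Q q.1.1 q.1.2 - Kpt a Q q.2.1.1 q.2.1.2
          + Kpt a Q q.2.2.1.1 q.2.2.1.2 - Kpt a Q q.2.2.2.1 q.2.2.2.2
        = ((2 * π / a) * (m : ℝ), (2 * π / a) * (n : ℝ))} = 196 :=
  stmt_19_general a Q ha hirr
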